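/- Along any solution of the classical equations of motion (with p_x conserved), the quantity p_x(t)·S_x(t), where S_x(t) = x(t) + (B/α²)p_y(t) is the x-coordinate of the center of the drifting ellipse, satisfies d/dt (p_x(t)S_x(t)) = 2p_x(0)² ω²/α², which is strictly positive whenever p_x(0) ≠ 0. -/
import Mathlib


/-- Along the explicit classical solution, with `S_x(t) = x(t) + (B/α²)p_y(t)`
the `x`-coordinate of the center of the drifting ellipse, one has
`d/dt (p_x(t)·S_x(t)) = 2 p_x(0)² ω²/α²`, which is strictly positive when
`p_x(0) ≠ 0`. -/
theorem stmt_4 (B ω : ℝ) (hω : ω ≠ 0) (α : ℝ) (hα : α = Real.sqrt (B ^ 2 + ω ^ 2))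
    (x0 y0 px0 py0 : ℝ) (x y px py : ℝ → ℝ)
    (hx : ∀ t, x t =
      -(B / (2 * α ^ 2)) * py0 * Real.cos (2 * α * t)
        + (B / α) * (y0 + (B / (4 * α ^ 2)) * px0) * Real.sin (2 * α * t)
        + 2 * px0 * t * (ω ^ 2 / α ^ 2) + x0 + (B / (2 * α ^ 2)) * py0)
    (hy : ∀ t, y t =
      (2 * α)⁻¹ * py0 * Real.sin (2 * α * t)
        + (y0 + (B / (4 * α ^ 2)) * px0) * Real.cos (2 * α * t)
        - (B / α ^ 2) * px0)
    (hpx : ∀ t, px t = px0)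
    (hpy : ∀ t, py t =
      (1 / 2) * py0 * Real.cos (2 * α * t)
        - α * (y0 + (B / (4 * α ^ 2)) * px0) * Real.sin (2 * α * t)) :
    (∀ t, deriv (fun s => px s * (x s + (B / α ^ 2) * py s)) t
        = 2 * px0 ^ 2 * ω ^ 2 / α ^ 2) ∧
    (px0 ≠ 0 → 0 < 2 * px0 ^ 2 * ω ^ 2 / α ^ 2) := by
  have hα0 : 0 < α := by
    rw [hα]
    exact Real.sqrt_pos.mpr (by positivity)
  have hαne : α ≠ 0 := ne_of_gt hα0
  have hfun : (fun s => px s * (x s + (B / α ^ 2) * py s))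
      = fun s => (2 * px0 ^ 2 * ω ^ 2 / α ^ 2) * s
          + px0 * (x0 + (B / (2 * α ^ 2)) * py0) := by
    funext s
    rw [hpx, hx, hpy]
    field_simp
    ring
  constructor
  · intro t
    rw [hfun]
    have h := (((hasDerivAt_id t).const_mul (2 * px0 ^ 2 * ω ^ 2 / α ^ 2)).add_const
      (px0 * (x0 + B / (2 * α ^ 2) * py0))).deriv
    simpa using h
  · intro h
    positivity
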